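/- arXiv:1105.3985 — 2 statements merged into one kernel-verified Lean document; each statement's English description precedes it below -/
import Mathlib

section
/- Let n ≥ 1 be an integer and let R_n = ℂ[x,y]/(xⁿ, yⁿ). Then the kernel of the ℂ-linear endomorphism of R_n given by multiplication by (the class of) x − y is an n-dimensional ℂ-vector space. -/
/-!
Multiplication by `x - y` is an endomorphism of `R_n`, which is finite-dimensional since it is
generated by the nilpotents `x`, `y`; so its kernel has the dimension of its cokernel
`R_n ⧸ (x - y)`. The cokernel is `ℂ[t] ⧸ (tⁿ)`: the diagonal map `x, y ↦ t` has the section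
`t ↦ x`, and modulo `x - y` every class agrees with its image under the resulting retraction,
so the kernel of the diagonal map is generated by `x - y`.
-/

open MvPolynomial

/-- The quotient `R_n = ℂ[x,y]/(xⁿ, yⁿ)`. -/
noncomputable abbrev unlinkIdeal (n : ℕ) : Ideal (MvPolynomial (Fin 2) ℂ) :=
  Ideal.span {X 0 ^ n, X 1 ^ n}

theorem MvPolynomial.finite_quotient_of_isNilpotent {R σ : Type*} [CommRing R] [Finite σ]
    (I : Ideal (MvPolynomial σ R)) (h : ∀ i, IsNilpotent (Ideal.Quotient.mk I (X i))) :
    Module.Finite R (MvPolynomial σ R ⧸ I) := by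
  have hadj : Algebra.adjoin R (Set.range fun i => Ideal.Quotient.mk I (X i)) = ⊤ := by
    rw [show (fun i => Ideal.Quotient.mk I (X i)) = Ideal.Quotient.mkₐ R I ∘ X from rfl,
      Set.range_comp, ← AlgHom.map_adjoin, adjoin_range_X, Algebra.map_top,
      AlgHom.range_eq_top]
    exact Ideal.Quotient.mkₐ_surjective R I
  refine ⟨?_⟩
  rw [← Algebra.top_toSubmodule, ← hadj]
  refine fg_adjoin_of_finite (Set.finite_range _) ?_
  rintro _ ⟨i, rfl⟩
  obtain ⟨m, hm⟩ := h i
  exact ⟨Polynomial.X ^ m, Polynomial.monic_X_pow m, by simp [hm]⟩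

theorem LinearMap.finrank_ker_eq_of_exact {K V W : Type*} [Field K] [AddCommGroup V]
    [Module K V] [AddCommGroup W] [Module K W] [FiniteDimensional K V]
    {f : V →ₗ[K] V} {g : V →ₗ[K] W} (hfg : Function.Exact f g) (hg : Function.Surjective g) :
    Module.finrank K (ker f) = Module.finrank K W := by
  have hf := f.finrank_range_add_finrank_ker
  have hg' := g.finrank_range_add_finrank_ker
  rw [range_eq_top.mpr hg, finrank_top, LinearMap.exact_iff.mp hfg] at hg'
  omega

theorem AdjoinRoot.root_X_pow_pow_eq_zero {R : Type*} [CommRing R] (n : ℕ) :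
    root (Polynomial.X ^ n : Polynomial R) ^ n = 0 := by
  rw [← mk_X, ← map_pow, mk_self]

namespace TruncatedMvPolynomial

variable {R : Type*} [CommRing R] (n : ℕ)

local notation "𝓘" => (Ideal.span {X 0 ^ n, X 1 ^ n} : Ideal (MvPolynomial (Fin 2) R))

theorem mk_X_pow_eq_zero (i : Fin 2) : Ideal.Quotient.mk 𝓘 (X i) ^ n = 0 := by
  rw [← map_pow, Ideal.Quotient.eq_zero_iff_mem]
  exact Ideal.subset_span (by fin_cases i <;> simp)

noncomputable def diagonal :
    MvPolynomial (Fin 2) R ⧸ 𝓘 →ₐ[R] AdjoinRoot (Polynomial.X ^ n : Polynomial R) :=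
  Ideal.Quotient.liftₐ _ (aeval fun _ => AdjoinRoot.root _) fun _ ha =>
    RingHom.mem_ker.mp <| (Ideal.span_le (I := RingHom.ker _)).mpr (by
      rintro _ (rfl | rfl) <;> simp [RingHom.mem_ker, AdjoinRoot.root_X_pow_pow_eq_zero]) ha

noncomputable def diagonalSection :
    AdjoinRoot (Polynomial.X ^ n : Polynomial R) →ₐ[R] MvPolynomial (Fin 2) R ⧸ 𝓘 :=
  AdjoinRoot.liftAlgHom _ (Algebra.ofId R _) (Ideal.Quotient.mk _ (X 0))
    (by simp [mk_X_pow_eq_zero])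

theorem diagonal_mk_X (i : Fin 2) :
    diagonal n (Ideal.Quotient.mk 𝓘 (X i)) = AdjoinRoot.root (Polynomial.X ^ n : Polynomial R) := by
  unfold diagonal
  rw [← Ideal.Quotient.mkₐ_eq_mk R, ← AlgHom.comp_apply, Ideal.Quotient.liftₐ_comp, aeval_X]

theorem diagonalSection_root :
    diagonalSection n (AdjoinRoot.root (Polynomial.X ^ n : Polynomial R)) =
      Ideal.Quotient.mk 𝓘 (X 0) := by
  simp [diagonalSection]

theorem diagonal_comp_diagonalSection :
    (diagonal n).comp (diagonalSection n) =
      AlgHom.id R (AdjoinRoot (Polynomial.X ^ n : Polynomial R)) :=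
  AdjoinRoot.algHom_ext (by simp [diagonalSection_root, diagonal_mk_X])

theorem diagonal_surjective : Function.Surjective (diagonal (R := R) n) :=
  fun t => ⟨diagonalSection n t, AlgHom.congr_fun (diagonal_comp_diagonalSection n) t⟩

theorem sub_diagonalSection_diagonal_mem (s : MvPolynomial (Fin 2) R ⧸ 𝓘) :
    s - diagonalSection n (diagonal n s) ∈ Ideal.span {Ideal.Quotient.mk 𝓘 (X 0 - X 1)} := by
  set J := Ideal.span {Ideal.Quotient.mk 𝓘 (X 0 - X 1)}
  have hX : Ideal.Quotient.mk J (Ideal.Quotient.mk 𝓘 (X 1)) =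
      Ideal.Quotient.mk J (Ideal.Quotient.mk 𝓘 (X 0)) := by
    rw [eq_comm, Ideal.Quotient.eq, ← map_sub]
    exact Ideal.subset_span rfl
  have h : (Ideal.Quotient.mkₐ R J).comp ((diagonalSection n).comp (diagonal n)) =
      Ideal.Quotient.mkₐ R J := by
    refine Ideal.Quotient.algHom_ext _ (MvPolynomial.algHom_ext fun i => ?_)
    fin_cases i <;> simp [diagonal_mk_X, diagonalSection_root, hX]
  exact Ideal.Quotient.eq.mp (AlgHom.congr_fun h s).symm

theorem ker_diagonal :
    RingHom.ker (diagonal (R := R) n) = Ideal.span {Ideal.Quotient.mk 𝓘 (X 0 - X 1)} := by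
  refine le_antisymm (fun s hs => ?_) (Ideal.span_le.mpr ?_)
  · simpa [RingHom.mem_ker.mp hs] using sub_diagonalSection_diagonal_mem n s
  · simp [diagonal_mk_X]

theorem exact_mulLeft_diagonal :
    Function.Exact (LinearMap.mulLeft R (Ideal.Quotient.mk 𝓘 (X 0 - X 1)))
      (diagonal n).toLinearMap := by
  intro s
  change diagonal n s = 0 ↔ _
  rw [← RingHom.mem_ker, ker_diagonal, Ideal.mem_span_singleton']
  simp [mul_comm]

end TruncatedMvPolynomial

open TruncatedMvPolynomial

theorem finrank_ker_mul_X_sub_Y_general (n : ℕ) :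
    FiniteDimensional ℂ
      ↥(LinearMap.ker (LinearMap.mulLeft ℂ
        (Ideal.Quotient.mk (unlinkIdeal n) (X 0 - X 1)))) ∧
    Module.finrank ℂ
      ↥(LinearMap.ker (LinearMap.mulLeft ℂ
        (Ideal.Quotient.mk (unlinkIdeal n) (X 0 - X 1)))) = n := by
  have : FiniteDimensional ℂ (MvPolynomial (Fin 2) ℂ ⧸ unlinkIdeal n) :=
    finite_quotient_of_isNilpotent _ fun i => ⟨n, mk_X_pow_eq_zero n i⟩
  refine ⟨inferInstance, ?_⟩
  rw [LinearMap.finrank_ker_eq_of_exact (exact_mulLeft_diagonal n) (diagonal_surjective n),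
    (AdjoinRoot.powerBasis (pow_ne_zero n Polynomial.X_ne_zero)).finrank,
    AdjoinRoot.powerBasis_dim, Polynomial.natDegree_X_pow]

/-- For `n ≥ 1`, the kernel of multiplication by `x - y` on `R_n = ℂ[x,y]/(xⁿ, yⁿ)`
is an `n`-dimensional `ℂ`-vector space. -/
theorem finrank_ker_mul_X_sub_Y (n : ℕ) (hn : 1 ≤ n) :
    FiniteDimensional ℂ
      ↥(LinearMap.ker (LinearMap.mulLeft ℂ
        (Ideal.Quotient.mk (unlinkIdeal n) (X 0 - X 1)))) ∧
    Module.finrank ℂ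
      ↥(LinearMap.ker (LinearMap.mulLeft ℂ
        (Ideal.Quotient.mk (unlinkIdeal n) (X 0 - X 1)))) = n :=
  finrank_ker_mul_X_sub_Y_general n
end

section
/- Let n ≥ 1 be an integer, let R_n = ℂ[x,y]/(xⁿ, yⁿ), and let h_n denote the class in R_n of the polynomial Σ_{i=0}^{n−1} x^i y^{n−1−i}. Then the kernel of the ℂ-linear endomorphism of R_n given by multiplication by x − y equals the ideal of R_n generated by h_n; moreover the map ℂ[x]/(xⁿ) → R_n sending the class of p(x) to the class of p(x)·h_n is a ℂ-linear isomorphism onto this kernel. -/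
open MvPolynomial

/-- The polynomial `h_n = Σ_{i=0}^{n-1} x^i y^(n-1-i)` in `ℂ[x,y]`. -/
noncomputable abbrev hPoly (n : ℕ) : MvPolynomial (Fin 2) ℂ :=
  ∑ i ∈ Finset.range n, X 0 ^ i * X 1 ^ (n - 1 - i)

/-!
Since `(x - y) · h_n = xⁿ - yⁿ`, the class of `h_n` is killed by `x - y`. Conversely, if
`(x - y) f = a xⁿ + b yⁿ`, then `(x - y)(f - a h_n) = (a + b) yⁿ`; as `x - y` is prime and does
not divide `yⁿ`, it divides `a + b`, whence `f ≡ a h_n` modulo `yⁿ`. Modulo `x - y` every `f` is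
congruent to a polynomial in `x` alone, so the ideal generated by `h_n` consists of the classes
`p(x) h_n`. Finally, in `R[x][y]` the coefficient of `y^(n-1)` in `p(x) h_n` is `p`, while for
elements of `(xⁿ, yⁿ)` it is divisible by `xⁿ`: this gives injectivity on `R[x]/(xⁿ)`.
-/

open Finset
open scoped Polynomial

namespace MvPolynomial

variable {R : Type*} [CommRing R]

theorem prime_X_zero_sub_X_one [IsDomain R] : Prime (X 0 - X 1 : MvPolynomial (Fin 2) R) := by
  have h : finSuccEquiv R 1 (X 0 - X 1) = Polynomial.X - Polynomial.C (X 0) := by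
    rw [map_sub, finSuccEquiv_X_zero, show (1 : Fin 2) = Fin.succ 0 from rfl,
      finSuccEquiv_X_succ]
  rw [← MulEquiv.prime_iff (finSuccEquiv R 1), h]
  exact Polynomial.prime_X_sub_C _

theorem X_zero_sub_X_one_mul_geom_sum₂ (n : ℕ) :
    (X 0 - X 1) * ∑ i ∈ range n, X 0 ^ i * X 1 ^ (n - 1 - i) =
      (X 0 ^ n - X 1 ^ n : MvPolynomial (Fin 2) R) := by
  rw [mul_comm, geom_sum₂_mul]

theorem X_zero_sub_X_one_mul_geom_sum₂_mem (n : ℕ) :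
    (X 0 - X 1) * ∑ i ∈ range n, X 0 ^ i * X 1 ^ (n - 1 - i) ∈
      Ideal.span {X 0 ^ n, (X 1 ^ n : MvPolynomial (Fin 2) R)} := by
  rw [X_zero_sub_X_one_mul_geom_sum₂]
  exact sub_mem (Ideal.subset_span (by simp)) (Ideal.subset_span (by simp))

theorem exists_eq_mul_geom_sum₂_add_mul_X_pow [IsDomain R] {n : ℕ} {f : MvPolynomial (Fin 2) R}
    (hf : (X 0 - X 1) * f ∈ Ideal.span {X 0 ^ n, X 1 ^ n}) :
    ∃ a c, f = a * ∑ i ∈ range n, X 0 ^ i * X 1 ^ (n - 1 - i) + c * X 1 ^ n := by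
  set h : MvPolynomial (Fin 2) R := ∑ i ∈ range n, X 0 ^ i * X 1 ^ (n - 1 - i)
  obtain ⟨a, b, hab⟩ := Ideal.mem_span_pair.mp hf
  have hfa : (X 0 - X 1) * (f - a * h) = (a + b) * X 1 ^ n := by
    linear_combination -hab - a * X_zero_sub_X_one_mul_geom_sum₂ (R := R) n
  have hY : ¬ X 0 - X 1 ∣ (X 1 ^ n : MvPolynomial (Fin 2) R) := fun ⟨d, hd⟩ => by
    simpa using congrArg (eval fun _ => (1 : R)) hd
  obtain ⟨c, hc⟩ := (prime_X_zero_sub_X_one.dvd_or_dvd ⟨_, hfa.symm⟩).resolve_right hY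
  refine ⟨a, c, ?_⟩
  have hfc : (X 0 - X 1) * (f - a * h) = (X 0 - X 1) * (c * X 1 ^ n) := by
    rw [hfa, hc]; ring
  linear_combination mul_left_cancel₀ prime_X_zero_sub_X_one.ne_zero hfc

theorem sub_aeval_X_zero_mem_span_X_zero_sub_X_one (f : MvPolynomial (Fin 2) R) :
    f - Polynomial.aeval (X 0) (aeval (fun _ => (Polynomial.X : R[X])) f) ∈
      Ideal.span {X 0 - X 1} := by
  set J : Ideal (MvPolynomial (Fin 2) R) := Ideal.span {X 0 - X 1}
  have hXX : Ideal.Quotient.mk J (X 1) = Ideal.Quotient.mk J (X 0) :=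
    (Ideal.Quotient.eq.2 (Ideal.mem_span_singleton_self _)).symm
  have hcomp : (Ideal.Quotient.mkₐ R J).comp
      ((Polynomial.aeval (X 0)).comp (aeval fun _ => (Polynomial.X : R[X]))) =
        Ideal.Quotient.mkₐ R J :=
    algHom_ext fun i => by fin_cases i <;> simp [hXX]
  exact Ideal.Quotient.eq.1 (DFunLike.congr_fun hcomp f).symm

theorem X_pow_dvd_coeff_aeval_of_mem {n k : ℕ} (hk : k < n) {g : MvPolynomial (Fin 2) R}
    (hg : g ∈ Ideal.span {X 0 ^ n, X 1 ^ n}) :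
    Polynomial.X ^ n ∣
      (aeval ![(Polynomial.C Polynomial.X : R[X][X]), Polynomial.X] g).coeff k := by
  obtain ⟨a, b, rfl⟩ := Ideal.mem_span_pair.mp hg
  simp only [map_add, map_mul, map_pow, aeval_X, Matrix.cons_val_zero, Matrix.cons_val_one]
  rw [← Polynomial.C_pow, Polynomial.coeff_add, Polynomial.coeff_mul_C,
    Polynomial.coeff_mul_X_pow', if_neg hk.not_ge, add_zero]
  exact dvd_mul_left _ _

theorem coeff_aeval_aeval_X_zero_mul_geom_sum₂ (n : ℕ) (p : R[X]) :
    (aeval ![(Polynomial.C Polynomial.X : R[X][X]), Polynomial.X]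
      (Polynomial.aeval (X 0 : MvPolynomial (Fin 2) R) p *
        ∑ i ∈ range (n + 1), X 0 ^ i * X 1 ^ (n - i))).coeff n = p := by
  have hC : Polynomial.aeval (Polynomial.C Polynomial.X : R[X][X]) p = Polynomial.C p := by
    simpa using Polynomial.aeval_algHom_apply (Polynomial.CAlgHom (A := R[X])) Polynomial.X p
  rw [map_mul, ← Polynomial.aeval_algHom_apply, map_sum]
  simp only [map_mul, map_pow, aeval_X, Matrix.cons_val_zero, Matrix.cons_val_one]
  rw [hC, Polynomial.coeff_C_mul, Polynomial.finsetSum_coeff]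
  simp only [← Polynomial.C_pow, Polynomial.coeff_C_mul_X_pow]
  rw [sum_eq_single 0 (fun i hi hi0 => if_neg (by simp at hi; omega)) (by simp)]
  simp

theorem X_pow_dvd_of_aeval_X_zero_mul_geom_sum₂_mem {n : ℕ} {p : R[X]}
    (hp : Polynomial.aeval (X 0 : MvPolynomial (Fin 2) R) p *
      ∑ i ∈ range n, X 0 ^ i * X 1 ^ (n - 1 - i) ∈ Ideal.span {X 0 ^ n, X 1 ^ n}) :
    Polynomial.X ^ n ∣ p := by
  cases n with
  | zero => exact pow_zero (Polynomial.X : R[X]) ▸ one_dvd p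
  | succ n =>
    simp only [add_tsub_cancel_right] at hp
    simpa only [coeff_aeval_aeval_X_zero_mul_geom_sum₂] using
      X_pow_dvd_coeff_aeval_of_mem n.lt_succ_self hp

section Quotient

variable (R) (n : ℕ)

noncomputable def mulGeomSum₂Map :
    (R[X] ⧸ Ideal.span {(Polynomial.X : R[X]) ^ n}) →ₗ[R]
      MvPolynomial (Fin 2) R ⧸ (Ideal.span {X 0 ^ n, X 1 ^ n} : Ideal (MvPolynomial (Fin 2) R)) :=
  LinearMap.mulRight R (Ideal.Quotient.mk _ (∑ i ∈ range n, X 0 ^ i * X 1 ^ (n - 1 - i))) ∘ₗ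
    (Ideal.quotientMapₐ _ (Polynomial.aeval (X 0)) (by
      rw [Ideal.span_singleton_le_iff_mem, Ideal.mem_comap, map_pow, Polynomial.aeval_X]
      exact Ideal.subset_span (by simp))).toLinearMap

theorem mulGeomSum₂Map_mk (p : R[X]) :
    mulGeomSum₂Map R n (Ideal.Quotient.mk _ p) =
      Ideal.Quotient.mk _ (Polynomial.aeval (X 0 : MvPolynomial (Fin 2) R) p *
        ∑ i ∈ range n, X 0 ^ i * X 1 ^ (n - 1 - i)) :=
  rfl

theorem mulGeomSum₂Map_injective : Function.Injective (mulGeomSum₂Map R n) := by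
  rw [injective_iff_map_eq_zero]
  intro q hq
  obtain ⟨p, rfl⟩ := Ideal.Quotient.mk_surjective q
  rw [mulGeomSum₂Map_mk, Ideal.Quotient.eq_zero_iff_mem] at hq
  rw [Ideal.Quotient.eq_zero_iff_mem, Ideal.mem_span_singleton]
  exact X_pow_dvd_of_aeval_X_zero_mul_geom_sum₂_mem hq

theorem range_mulGeomSum₂Map :
    LinearMap.range (mulGeomSum₂Map R n) = (Ideal.span {Ideal.Quotient.mk _
      (∑ i ∈ range n, X 0 ^ i * X 1 ^ (n - 1 - i) : MvPolynomial (Fin 2) R)}).restrictScalars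
        R := by
  ext z
  rw [LinearMap.mem_range, Submodule.restrictScalars_mem, Ideal.mem_span_singleton']
  constructor
  · rintro ⟨q, rfl⟩
    obtain ⟨p, rfl⟩ := Ideal.Quotient.mk_surjective q
    exact ⟨Ideal.Quotient.mk _ (Polynomial.aeval (X 0) p), (map_mul _ _ _).symm⟩
  · rintro ⟨r, rfl⟩
    obtain ⟨f, rfl⟩ := Ideal.Quotient.mk_surjective r
    obtain ⟨c, hc⟩ :=
      Ideal.mem_span_singleton'.mp (sub_aeval_X_zero_mem_span_X_zero_sub_X_one f)
    refine ⟨Ideal.Quotient.mk _ (aeval (fun _ => Polynomial.X) f), ?_⟩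
    rw [mulGeomSum₂Map_mk, ← map_mul, Ideal.Quotient.eq]
    set h : MvPolynomial (Fin 2) R := ∑ i ∈ range n, X 0 ^ i * X 1 ^ (n - 1 - i)
    rw [show Polynomial.aeval (X 0) (aeval (fun _ => Polynomial.X) f) * h - f * h =
      -c * ((X 0 - X 1) * h) by linear_combination h * hc]
    exact Ideal.mul_mem_left _ _ (X_zero_sub_X_one_mul_geom_sum₂_mem n)

theorem ker_mulLeft_mk_X_zero_sub_X_one [IsDomain R] :
    LinearMap.ker (LinearMap.mulLeft R (Ideal.Quotient.mk
      (Ideal.span {X 0 ^ n, X 1 ^ n} : Ideal (MvPolynomial (Fin 2) R)) (X 0 - X 1))) =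
      (Ideal.span {Ideal.Quotient.mk _
        (∑ i ∈ range n, X 0 ^ i * X 1 ^ (n - 1 - i) : MvPolynomial (Fin 2) R)}).restrictScalars
          R := by
  ext z
  rw [LinearMap.mem_ker, LinearMap.mulLeft_apply, Submodule.restrictScalars_mem,
    Ideal.mem_span_singleton']
  constructor
  · intro hz
    obtain ⟨f, rfl⟩ := Ideal.Quotient.mk_surjective z
    rw [← map_mul, Ideal.Quotient.eq_zero_iff_mem] at hz
    obtain ⟨a, c, rfl⟩ := exists_eq_mul_geom_sum₂_add_mul_X_pow hz
    have hY : Ideal.Quotient.mk (Ideal.span {X 0 ^ n, X 1 ^ n})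
        (X 1 ^ n : MvPolynomial (Fin 2) R) = 0 :=
      Ideal.Quotient.eq_zero_iff_mem.2 (Ideal.subset_span (by simp))
    exact ⟨Ideal.Quotient.mk _ a, by rw [map_add, map_mul, map_mul, hY, mul_zero, add_zero]⟩
  · rintro ⟨r, rfl⟩
    rw [mul_left_comm, ← map_mul,
      Ideal.Quotient.eq_zero_iff_mem.2 (X_zero_sub_X_one_mul_geom_sum₂_mem n), mul_zero]

end Quotient

end MvPolynomial

theorem ker_mul_X_sub_Y_eq_span_hPoly_general (n : ℕ) :
    ((LinearMap.ker (LinearMap.mulLeft ℂ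
        (Ideal.Quotient.mk (unlinkIdeal n) (X 0 - X 1)))) :
          Set (MvPolynomial (Fin 2) ℂ ⧸ unlinkIdeal n)) =
      ((Ideal.span {Ideal.Quotient.mk (unlinkIdeal n) (hPoly n)}) :
          Set (MvPolynomial (Fin 2) ℂ ⧸ unlinkIdeal n)) ∧
    ∃ φ : (Polynomial ℂ ⧸ Ideal.span {(Polynomial.X : Polynomial ℂ) ^ n}) →ₗ[ℂ]
        (MvPolynomial (Fin 2) ℂ ⧸ unlinkIdeal n),
      (∀ p : Polynomial ℂ,
        φ (Ideal.Quotient.mk (Ideal.span {(Polynomial.X : Polynomial ℂ) ^ n}) p) =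
          Ideal.Quotient.mk (unlinkIdeal n)
            (Polynomial.aeval (X 0 : MvPolynomial (Fin 2) ℂ) p * hPoly n)) ∧
      Function.Injective φ ∧
      LinearMap.range φ = LinearMap.ker (LinearMap.mulLeft ℂ
        (Ideal.Quotient.mk (unlinkIdeal n) (X 0 - X 1))) := by
  have hker := ker_mulLeft_mk_X_zero_sub_X_one ℂ n
  refine ⟨congrArg SetLike.coe hker, mulGeomSum₂Map ℂ n, mulGeomSum₂Map_mk ℂ n,
    mulGeomSum₂Map_injective ℂ n, ?_⟩
  rw [range_mulGeomSum₂Map, hker]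

/-- For `n ≥ 1`, the kernel of multiplication by `x - y` on `R_n = ℂ[x,y]/(xⁿ, yⁿ)` equals
the ideal generated by the class of `h_n = Σ_{i=0}^{n-1} x^i y^(n-1-i)`; moreover the map
`ℂ[x]/(xⁿ) → R_n` sending the class of `p(x)` to the class of `p(x) · h_n` is a `ℂ`-linear
isomorphism onto this kernel. -/
theorem ker_mul_X_sub_Y_eq_span_hPoly (n : ℕ) (hn : 1 ≤ n) :
    ((LinearMap.ker (LinearMap.mulLeft ℂ
        (Ideal.Quotient.mk (unlinkIdeal n) (X 0 - X 1)))) :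
          Set (MvPolynomial (Fin 2) ℂ ⧸ unlinkIdeal n)) =
      ((Ideal.span {Ideal.Quotient.mk (unlinkIdeal n) (hPoly n)}) :
          Set (MvPolynomial (Fin 2) ℂ ⧸ unlinkIdeal n)) ∧
    ∃ φ : (Polynomial ℂ ⧸ Ideal.span {(Polynomial.X : Polynomial ℂ) ^ n}) →ₗ[ℂ]
        (MvPolynomial (Fin 2) ℂ ⧸ unlinkIdeal n),
      (∀ p : Polynomial ℂ,
        φ (Ideal.Quotient.mk (Ideal.span {(Polynomial.X : Polynomial ℂ) ^ n}) p) =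
          Ideal.Quotient.mk (unlinkIdeal n)
            (Polynomial.aeval (X 0 : MvPolynomial (Fin 2) ℂ) p * hPoly n)) ∧
      Function.Injective φ ∧
      LinearMap.range φ = LinearMap.ker (LinearMap.mulLeft ℂ
        (Ideal.Quotient.mk (unlinkIdeal n) (X 0 - X 1))) :=
  ker_mul_X_sub_Y_eq_span_hPoly_general n
end
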